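/- arXiv:2107.01131 — 12 statements merged into one kernel-verified Lean document; each statement's English description precedes it below -/
import Mathlib

section
/- Let X and Y be discrete random variables on finite sets with joint pmf p(x,y) and marginals p(x), p(y), and let q(y|x) be any conditional pmf with q(y|x) > 0 whenever p(x,y) > 0. Then I(X;Y) ≥ E_{p(x,y)}[log(q(y|x)/p(y))], with equality iff q(y|x) = p(y|x) on the support of p. -/
/-! The gap between `I(X;Y)` and the variational bound is, term by term, the divergence
`∑ p(x,y) log (p(x,y) / (p(x) q(y|x)))` between two nonnegative weights of the same total mass.
Since `a log (a/b) - (a - b) = b · klFun (a/b)` with `klFun ≥ 0` vanishing only at `1`, such a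
divergence is nonnegative and vanishes exactly when the two weights agree on the support of the
first one. -/

open Finset Real InformationTheory

lemma mul_log_div_sub_sub_eq_mul_klFun {a b : ℝ} (hab : b = 0 → a = 0) :
    a * log (a / b) - (a - b) = b * klFun (a / b) := by
  rcases eq_or_ne b 0 with hb | hb
  · simp [hb, hab hb]
  · rw [klFun_apply]
    field_simp
    ring

section Gibbs

variable {ι : Type*} {s : Finset ι} {a b : ι → ℝ}

lemma sum_mul_log_div_sub_sub_eq_sum_mul_klFun (hab : ∀ i ∈ s, 0 < a i → 0 < b i)
    (ha : ∀ i ∈ s, 0 ≤ a i) :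
    ∑ i ∈ s, a i * log (a i / b i) - (∑ i ∈ s, a i - ∑ i ∈ s, b i) =
      ∑ i ∈ s, b i * klFun (a i / b i) := by
  rw [← sum_sub_distrib, ← sum_sub_distrib]
  refine sum_congr rfl fun i hi => mul_log_div_sub_sub_eq_mul_klFun fun hb => ?_
  by_contra h
  exact (hab i hi ((ha i hi).lt_of_ne' h)).ne' hb

lemma mul_klFun_div_nonneg {a b : ℝ} (ha : 0 ≤ a) (hb : 0 ≤ b) : 0 ≤ b * klFun (a / b) :=
  mul_nonneg hb (klFun_nonneg (div_nonneg ha hb))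

lemma sum_mul_log_div_nonneg (ha : ∀ i ∈ s, 0 ≤ a i) (hb : ∀ i ∈ s, 0 ≤ b i)
    (hab : ∀ i ∈ s, 0 < a i → 0 < b i) (hsum : ∑ i ∈ s, b i ≤ ∑ i ∈ s, a i) :
    0 ≤ ∑ i ∈ s, a i * log (a i / b i) := by
  have := sum_mul_log_div_sub_sub_eq_sum_mul_klFun hab ha
  have := sum_nonneg fun i hi => mul_klFun_div_nonneg (ha i hi) (hb i hi)
  linarith

lemma sum_mul_log_div_eq_zero_iff (ha : ∀ i ∈ s, 0 ≤ a i) (hb : ∀ i ∈ s, 0 ≤ b i)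
    (hab : ∀ i ∈ s, 0 < a i → 0 < b i) (hsum : ∑ i ∈ s, b i ≤ ∑ i ∈ s, a i) :
    ∑ i ∈ s, a i * log (a i / b i) = 0 ↔ ∀ i ∈ s, 0 < a i → a i = b i := by
  refine ⟨fun h i hi hai => ?_, fun h => sum_eq_zero fun i hi => ?_⟩
  · have hnn : ∀ i ∈ s, 0 ≤ b i * klFun (a i / b i) :=
      fun i hi => mul_klFun_div_nonneg (ha i hi) (hb i hi)
    have hzero : ∑ i ∈ s, b i * klFun (a i / b i) = 0 :=
      le_antisymm (by linarith [sum_mul_log_div_sub_sub_eq_sum_mul_klFun hab ha]) (sum_nonneg hnn)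
    have hterm := (sum_eq_zero_iff_of_nonneg hnn).1 hzero i hi
    have hbi := hab i hi hai
    rw [mul_eq_zero, klFun_eq_zero_iff (div_nonneg (ha i hi) (hb i hi)),
      div_eq_one_iff_eq hbi.ne'] at hterm
    exact hterm.resolve_left hbi.ne'
  · rcases (ha i hi).eq_or_lt with hai | hai
    · simp [← hai]
    · simp [← h i hi hai, div_self hai.ne']

end Gibbs
lemma mutualInfo_sub_variational_eq {α β : Type*} [Fintype α] [Fintype β]
    (p q : α → β → ℝ) (hp0 : ∀ x y, 0 ≤ p x y) (hqp : ∀ x y, 0 < p x y → 0 < q x y) :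
    ∑ x, ∑ y, p x y * log (p x y / ((∑ y', p x y') * (∑ x', p x' y))) -
        ∑ x, ∑ y, p x y * log (q x y / (∑ x', p x' y)) =
      ∑ z : α × β, p z.1 z.2 * log (p z.1 z.2 / ((∑ y', p z.1 y') * q z.1 z.2)) := by
  rw [Fintype.sum_prod_type, ← sum_sub_distrib]
  refine sum_congr rfl fun x _ => ?_
  rw [← sum_sub_distrib]
  refine sum_congr rfl fun y _ => ?_
  rcases (hp0 x y).eq_or_lt with hpxy | hpxy
  · simp [← hpxy]
  have hx : 0 < ∑ y', p x y' := hpxy.trans_le (single_le_sum (fun y _ => hp0 x y) (mem_univ y))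
  have hy : 0 < ∑ x', p x' y := hpxy.trans_le (single_le_sum (fun x _ => hp0 x y) (mem_univ x))
  have hq := hqp x y hpxy
  rw [log_div hpxy.ne' (by positivity), log_mul hx.ne' hy.ne', log_div hq.ne' hy.ne',
    log_div hpxy.ne' (by positivity), log_mul hx.ne' hq.ne']
  ring

open Finset in
theorem barber_agakov_bound_general {α β : Type*} [Fintype α] [Fintype β]
    (p : α → β → ℝ) (q : α → β → ℝ)
    (hp0 : ∀ x y, 0 ≤ p x y)
    (hq0 : ∀ x y, 0 ≤ q x y) (hq1 : ∀ x, ∑ y, q x y = 1)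
    (hqp : ∀ x y, 0 < p x y → 0 < q x y) :
    (∑ x, ∑ y, p x y * Real.log (p x y / ((∑ y', p x y') * (∑ x', p x' y))) ≥
        ∑ x, ∑ y, p x y * Real.log (q x y / (∑ x', p x' y))) ∧
      (∑ x, ∑ y, p x y * Real.log (p x y / ((∑ y', p x y') * (∑ x', p x' y))) =
          ∑ x, ∑ y, p x y * Real.log (q x y / (∑ x', p x' y)) ↔
        ∀ x y, 0 < p x y → q x y = p x y / (∑ y', p x y')) := by
  have hpx : ∀ x y, 0 < p x y → 0 < ∑ y', p x y' := fun x y h =>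
    h.trans_le (single_le_sum (fun y _ => hp0 x y) (mem_univ y))
  have ha : ∀ z ∈ (univ : Finset (α × β)), 0 ≤ p z.1 z.2 := fun z _ => hp0 z.1 z.2
  have hb : ∀ z ∈ (univ : Finset (α × β)), 0 ≤ (∑ y', p z.1 y') * q z.1 z.2 :=
    fun z _ => mul_nonneg (sum_nonneg fun y _ => hp0 z.1 y) (hq0 z.1 z.2)
  have hab : ∀ z ∈ (univ : Finset (α × β)), 0 < p z.1 z.2 → 0 < (∑ y', p z.1 y') * q z.1 z.2 :=
    fun z _ h => mul_pos (hpx _ _ h) (hqp _ _ h)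
  have hsum : ∑ z : α × β, (∑ y', p z.1 y') * q z.1 z.2 ≤ ∑ z : α × β, p z.1 z.2 := by
    simp only [Fintype.sum_prod_type, ← mul_sum, hq1, mul_one, le_refl]
  rw [ge_iff_le, ← sub_nonneg, ← sub_eq_zero, mutualInfo_sub_variational_eq p q hp0 hqp]
  refine ⟨sum_mul_log_div_nonneg ha hb hab hsum,
    (sum_mul_log_div_eq_zero_iff ha hb hab hsum).trans ?_⟩
  simp only [mem_univ, true_implies, Prod.forall]
  refine forall₂_congr fun x y => imp_congr_right fun h => ?_
  rw [eq_div_iff (hpx x y h).ne', mul_comm, eq_comm]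

open Finset in
/-- Barber–Agakov variational lower bound on mutual information for finite
discrete random variables, with the equality characterization: equality holds
iff `q(y|x) = p(y|x)` on the support of `p`. -/
theorem barber_agakov_bound {α β : Type*} [Fintype α] [Fintype β]
    (p : α → β → ℝ) (q : α → β → ℝ)
    (hp0 : ∀ x y, 0 ≤ p x y) (hp1 : ∑ x, ∑ y, p x y = 1)
    (hq0 : ∀ x y, 0 ≤ q x y) (hq1 : ∀ x, ∑ y, q x y = 1)
    (hqp : ∀ x y, 0 < p x y → 0 < q x y) :
    (∑ x, ∑ y, p x y * Real.log (p x y / ((∑ y', p x y') * (∑ x', p x' y))) ≥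
        ∑ x, ∑ y, p x y * Real.log (q x y / (∑ x', p x' y))) ∧
      (∑ x, ∑ y, p x y * Real.log (p x y / ((∑ y', p x y') * (∑ x', p x' y))) =
          ∑ x, ∑ y, p x y * Real.log (q x y / (∑ x', p x' y)) ↔
        ∀ x y, 0 < p x y → q x y = p x y / (∑ y', p x y')) :=
  barber_agakov_bound_general p q hp0 hq0 hq1 hqp
end

section
/- Let X, Y be discrete random variables on finite sets with joint pmf p(x,y) (with positive marginals) and let g : X × Y → ℝ be any function. Define Z_g(x) = E_{p(y)}[e^{g(x,y)}]. Then I(X;Y) ≥ E_{p(x,y)}[g(x,y) - log Z_g(x)]. -/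
/-- Unnormalized Barber–Agakov (UBA) lower bound: for any critic `g`,
`I(X;Y) ≥ E_{p(x,y)}[g(x,y) - log Z_g(x)]` where
`Z_g(x) = E_{p(y)}[e^{g(x,y)}]`. -/
theorem uba_bound {α β : Type*} [Fintype α] [Fintype β]
    (p : α → β → ℝ) (g : α → β → ℝ)
    (hp0 : ∀ x y, 0 ≤ p x y) (hp1 : ∑ x, ∑ y, p x y = 1)
    (hpx : ∀ x, 0 < ∑ y, p x y) (hpy : ∀ y, 0 < ∑ x, p x y) :
    ∑ x, ∑ y, p x y * Real.log (p x y / ((∑ y', p x y') * (∑ x', p x' y))) ≥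
      ∑ x, ∑ y, p x y *
        (g x y - Real.log (∑ y', (∑ x', p x' y') * Real.exp (g x y'))) := by
  by_cases hα : Nonempty α
  · have hβ : Nonempty β := by
      obtain ⟨x⟩ := hα
      by_contra h
      rw [not_nonempty_iff] at h
      have := hpx x
      simp [Finset.univ_eq_empty] at this
    set Z : α → ℝ := fun x => ∑ y', (∑ x', p x' y') * Real.exp (g x y') with hZ
    have hZpos : ∀ x, 0 < Z x := fun x =>
      Finset.sum_pos (fun y _ => mul_pos (hpy y) (Real.exp_pos _)) Finset.univ_nonempty
    set q : α → β → ℝ :=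
      fun x y => (∑ y', p x y') * (∑ x', p x' y) * Real.exp (g x y) / Z x with hq
    have hqpos : ∀ x y, 0 < q x y := fun x y =>
      div_pos (mul_pos (mul_pos (hpx x) (hpy y)) (Real.exp_pos _)) (hZpos x)
    have hqsum : ∀ x, ∑ y, q x y = ∑ y, p x y := by
      intro x
      have : ∑ y, q x y = (∑ y', p x y') / Z x * ∑ y, (∑ x', p x' y) * Real.exp (g x y) := by
        rw [Finset.mul_sum]
        apply Finset.sum_congr rfl
        intro y _
        field_simp [hq]
        ring
      rw [this, show (∑ y, (∑ x', p x' y) * Real.exp (g x y)) = Z x from rfl]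
      rw [div_mul_cancel₀ _ (hZpos x).ne']
    have key : ∀ x y, p x y * (g x y - Real.log (Z x)) ≤
        p x y * Real.log (p x y / ((∑ y', p x y') * (∑ x', p x' y))) + (q x y - p x y) := by
      intro x y
      rcases eq_or_lt_of_le (hp0 x y) with h0 | hpos
      · rw [← h0]
        simp
        exact (hqpos x y).le
      · have hpxp := hpx x
        have hpyp := hpy y
        have hqp := hqpos x y
        have hlog : Real.log (p x y / ((∑ y', p x y') * (∑ x', p x' y))) =
            Real.log (p x y / q x y) + (g x y - Real.log (Z x)) := by
          rw [Real.log_div (ne_of_gt hpos) (ne_of_gt (mul_pos hpxp hpyp)),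
              Real.log_div (ne_of_gt hpos) (ne_of_gt hqp), hq]
          simp only
          rw [Real.log_div (ne_of_gt (mul_pos (mul_pos hpxp hpyp) (Real.exp_pos _)))
                (ne_of_gt (hZpos x)),
              Real.log_mul (ne_of_gt (mul_pos hpxp hpyp)) (ne_of_gt (Real.exp_pos _)),
              Real.log_exp]
          ring
        rw [hlog]
        have h1 : Real.log (q x y / p x y) ≤ q x y / p x y - 1 :=
          Real.log_le_sub_one_of_pos (div_pos hqp hpos)
        have h2 : -(Real.log (p x y / q x y)) ≤ q x y / p x y - 1 := by
          rw [← Real.log_inv, inv_div]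
          exact h1
        nlinarith [mul_le_mul_of_nonneg_left h2 (le_of_lt hpos),
          mul_div_cancel₀ (q x y) (ne_of_gt hpos)]
    calc ∑ x, ∑ y, p x y * (g x y - Real.log (Z x))
        ≤ ∑ x, ∑ y, (p x y * Real.log (p x y / ((∑ y', p x y') * (∑ x', p x' y)))
            + (q x y - p x y)) := by
          apply Finset.sum_le_sum
          intro x _
          exact Finset.sum_le_sum fun y _ => key x y
      _ = ∑ x, ∑ y, p x y * Real.log (p x y / ((∑ y', p x y') * (∑ x', p x' y))) := by
          rw [← sub_eq_zero]
          have : ∀ x, ∑ y, (p x y * Real.log (p x y / ((∑ y', p x y') * (∑ x', p x' y)))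
              + (q x y - p x y)) =
              (∑ y, p x y * Real.log (p x y / ((∑ y', p x y') * (∑ x', p x' y))))
              + ((∑ y, q x y) - ∑ y, p x y) := by
            intro x; rw [Finset.sum_add_distrib, Finset.sum_sub_distrib]
          simp only [this, hqsum]
          simp
  · rw [not_nonempty_iff] at hα
    simp [Finset.univ_eq_empty]
end

section
/- Under the UBA setting, equality I(X;Y) = E_{p(x,y)}[g(x,y) - log Z_g(x)] holds when g(x,y) = log(p(x,y)/(p(x)p(y))) + c(x) for an arbitrary function c(x). -/
/-- The UBA bound is tight when the critic takes the form
`g(x,y) = log(p(x,y)/(p(x)p(y))) + c(x)` for an arbitrary function `c`. -/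
theorem uba_tight {α β : Type*} [Fintype α] [Fintype β]
    (p : α → β → ℝ) (g : α → β → ℝ) (c : α → ℝ)
    (hp : ∀ x y, 0 < p x y) (hp1 : ∑ x, ∑ y, p x y = 1)
    (hg : ∀ x y, g x y =
      Real.log (p x y / ((∑ y', p x y') * (∑ x', p x' y))) + c x) :
    ∑ x, ∑ y, p x y * Real.log (p x y / ((∑ y', p x y') * (∑ x', p x' y))) =
      ∑ x, ∑ y, p x y *
        (g x y - Real.log (∑ y', (∑ x', p x' y') * Real.exp (g x y'))) := by
  rcases isEmpty_or_nonempty α with hα | hα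
  · simp
  rcases isEmpty_or_nonempty β with hβ | hβ
  · simp
  apply Finset.sum_congr rfl
  intro x _
  have hpX : 0 < ∑ y', p x y' := Finset.sum_pos (fun y _ => hp x y) Finset.univ_nonempty
  have hZ : ∑ y', (∑ x', p x' y') * Real.exp (g x y') = Real.exp (c x) := by
    have key : ∀ y', (∑ x', p x' y') * Real.exp (g x y') =
        (p x y' / (∑ y'', p x y'')) * Real.exp (c x) := by
      intro y'
      have hpY : 0 < ∑ x', p x' y' := Finset.sum_pos (fun a _ => hp a y') Finset.univ_nonempty
      rw [hg, Real.exp_add, Real.exp_log (div_pos (hp x y') (mul_pos hpX hpY))]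
      field_simp
    rw [Finset.sum_congr rfl (fun y' _ => key y'), ← Finset.sum_mul, ← Finset.sum_div,
      div_self hpX.ne', one_mul]
  rw [hZ, Real.log_exp]
  apply Finset.sum_congr rfl
  intro y _
  rw [hg]
  ring
end

section
/- Let X, Y be finite discrete random variables with joint pmf p(x,y) and positive marginals. For any functions g : X × Y → ℝ and u : X × Y → ℝ, the FLO functional I_FLO(g,u) = 1 - E_{p(x,y)}[u(x,y) + e^{-u(x,y)}·E_{p(y')}[e^{g(x,y') - g(x,y)}]] satisfies I_FLO(g,u) ≤ I(X;Y), where y' is sampled independently from the marginal p(y). -/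
lemma fenchel_aux (v t : ℝ) (ht : 0 < t) : 1 - v - Real.exp (-v) * t ≤ - Real.log t := by
  have h := Real.add_one_le_exp (Real.log t - v)
  rw [Real.exp_sub, Real.exp_log ht] at h
  have he : t / Real.exp v = Real.exp (-v) * t := by
    rw [Real.exp_neg]; field_simp
  rw [he] at h
  linarith

/-- The FLO functional
`I_FLO(g,u) = 1 - E_{p(x,y)}[u(x,y) + e^{-u(x,y)}·E_{p(y')}[e^{g(x,y')-g(x,y)}]]`
is a lower bound on the mutual information `I(X;Y)`. -/
theorem flo_lower_bound {α β : Type*} [Fintype α] [Fintype β]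
    (p : α → β → ℝ) (g u : α → β → ℝ)
    (hp0 : ∀ x y, 0 ≤ p x y) (hp1 : ∑ x, ∑ y, p x y = 1)
    (hpx : ∀ x, 0 < ∑ y, p x y) (hpy : ∀ y, 0 < ∑ x, p x y) :
    1 - ∑ x, ∑ y, p x y * (u x y +
        Real.exp (-u x y) *
          ∑ y', (∑ x', p x' y') * Real.exp (g x y' - g x y)) ≤
      ∑ x, ∑ y, p x y * Real.log (p x y / ((∑ y', p x y') * (∑ x', p x' y))) := by
  classical
  set px : α → ℝ := fun x => ∑ y, p x y with hpx_def
  set py : β → ℝ := fun y => ∑ x, p x y with hpy_def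
  have hβ : (Finset.univ : Finset β).Nonempty := by
    by_contra h
    rw [Finset.not_nonempty_iff_eq_empty] at h
    have := hp1
    simp only [hpx_def] at this
    rw [h] at this
    simp at this
  set S : α → β → ℝ := fun x y => ∑ y', py y' * Real.exp (g x y' - g x y) with hS_def
  set Z : α → ℝ := fun x => ∑ y', py y' * Real.exp (g x y') with hZ_def
  have hZ : ∀ x, 0 < Z x := fun x =>
    Finset.sum_pos (fun y _ => mul_pos (hpy y) (Real.exp_pos _)) hβ
  have hS_eq : ∀ x y, S x y = Real.exp (-(g x y)) * Z x := by
    intro x y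
    simp only [hS_def, hZ_def, Finset.mul_sum]
    apply Finset.sum_congr rfl
    intro y' _
    rw [Real.exp_sub, Real.exp_neg, div_eq_mul_inv]
    ring
  have hS : ∀ x y, 0 < S x y := by
    intro x y
    rw [hS_eq]
    exact mul_pos (Real.exp_pos _) (hZ x)
  -- key sum identity
  have hsum : ∑ x, ∑ y, px x * py y / S x y = 1 := by
    have hinner : ∀ x, ∑ y, px x * py y / S x y = px x := by
      intro x
      have h1 : ∀ y, px x * py y / S x y = px x / Z x * (py y * Real.exp (g x y)) := by
        intro y
        rw [hS_eq, Real.exp_neg]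
        have hZx := (hZ x).ne'
        field_simp
      calc ∑ y, px x * py y / S x y
          = ∑ y, px x / Z x * (py y * Real.exp (g x y)) :=
            Finset.sum_congr rfl fun y _ => h1 y
        _ = px x / Z x * Z x := by rw [← Finset.mul_sum]
        _ = px x := by field_simp [(hZ x).ne']
    rw [Finset.sum_congr rfl fun x _ => hinner x]
    exact hp1
  -- step 1: Fenchel pointwise
  have step1 : ∀ x y, p x y - p x y * (u x y + Real.exp (-u x y) * S x y)
      ≤ p x y * (- Real.log (S x y)) := by
    intro x y
    have hf := fenchel_aux (u x y) (S x y) (hS x y)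
    have h2 := mul_le_mul_of_nonneg_left hf (hp0 x y)
    nlinarith [h2]
  -- step 2: log pointwise
  have step2 : ∀ x y, p x y * (- Real.log (S x y))
      ≤ p x y * Real.log (p x y / (px x * py y)) - p x y + px x * py y / S x y := by
    intro x y
    rcases eq_or_lt_of_le (hp0 x y) with h0 | h0
    · rw [← h0]
      simp only [zero_mul, neg_zero, zero_sub, sub_zero, zero_add]
      have : 0 ≤ px x * py y / S x y :=
        div_nonneg (mul_nonneg (hpx x).le (hpy y).le) (hS x y).le
      linarith
    · have hpxy : 0 < px x * py y := mul_pos (hpx x) (hpy y)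
      have hr : 0 < p x y * S x y / (px x * py y) := div_pos (mul_pos h0 (hS x y)) hpxy
      have hinv : 0 < px x * py y / (p x y * S x y) := div_pos hpxy (mul_pos h0 (hS x y))
      have h := Real.log_le_sub_one_of_pos hinv
      have hlogrec : Real.log (px x * py y / (p x y * S x y))
          = - Real.log (p x y * S x y / (px x * py y)) := by
        rw [← Real.log_inv]
        congr 1
        field_simp
      rw [hlogrec] at h
      have hrlog : Real.log (p x y * S x y / (px x * py y))
          = Real.log (p x y / (px x * py y)) + Real.log (S x y) := by
        rw [show p x y * S x y / (px x * py y) = p x y / (px x * py y) * S x y by ring,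
          Real.log_mul (div_pos h0 hpxy).ne' (hS x y).ne']
      rw [hrlog] at h
      -- h : -(log(p/(pxpy)) + log S) ≤ pxpy/(pS) - 1
      have h3 := mul_le_mul_of_nonneg_left h (hp0 x y)
      have heq : p x y * (px x * py y / (p x y * S x y)) = px x * py y / S x y := by
        field_simp [h0.ne', (hS x y).ne']
      nlinarith [h3, heq]
  calc 1 - ∑ x, ∑ y, p x y * (u x y + Real.exp (-u x y) * S x y)
      = ∑ x, ∑ y, (p x y - p x y * (u x y + Real.exp (-u x y) * S x y)) := by
        simp only [Finset.sum_sub_distrib]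
        rw [hp1]
    _ ≤ ∑ x, ∑ y, p x y * (- Real.log (S x y)) :=
        Finset.sum_le_sum fun x _ => Finset.sum_le_sum fun y _ => step1 x y
    _ ≤ ∑ x, ∑ y, (p x y * Real.log (p x y / (px x * py y)) - p x y + px x * py y / S x y) :=
        Finset.sum_le_sum fun x _ => Finset.sum_le_sum fun y _ => step2 x y
    _ = (∑ x, ∑ y, p x y * Real.log (p x y / (px x * py y)))
        - (∑ x, ∑ y, p x y) + ∑ x, ∑ y, px x * py y / S x y := by
        simp only [Finset.sum_sub_distrib, Finset.sum_add_distrib]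
    _ = ∑ x, ∑ y, p x y * Real.log (p x y / (px x * py y)) := by
        rw [hp1, hsum]; ring
end

section
/- In the FLO setting, if g*(x,y) = log p(x|y) + c(x) for an arbitrary function c(x) and u*(x,y) = -log(p(x,y)/(p(x)p(y))), then I_FLO(g*, u*) = I(X;Y); i.e., the FLO bound is tight. -/
/-- Tightness of the FLO bound: with the optimal critics
`g*(x,y) = log p(x|y) + c(x)` and `u*(x,y) = -log(p(x,y)/(p(x)p(y)))`,
`I_FLO(g*,u*) = I(X;Y)`. -/
theorem flo_tight {α β : Type*} [Fintype α] [Fintype β]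
    (p : α → β → ℝ) (g u : α → β → ℝ) (c : α → ℝ)
    (hp : ∀ x y, 0 < p x y) (hp1 : ∑ x, ∑ y, p x y = 1)
    (hg : ∀ x y, g x y = Real.log (p x y / (∑ x', p x' y)) + c x)
    (hu : ∀ x y, u x y =
      -Real.log (p x y / ((∑ y', p x y') * (∑ x', p x' y)))) :
    1 - ∑ x, ∑ y, p x y * (u x y +
        Real.exp (-u x y) *
          ∑ y', (∑ x', p x' y') * Real.exp (g x y' - g x y)) =
      ∑ x, ∑ y, p x y * Real.log (p x y / ((∑ y', p x y') * (∑ x', p x' y))) := by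
  have hα : Nonempty α := by
    rcases isEmpty_or_nonempty α with h | h
    · simp at hp1
    · exact h
  have hβ : Nonempty β := by
    rcases isEmpty_or_nonempty β with h | h
    · simp at hp1
    · exact h
  have hpx : ∀ x, 0 < ∑ y', p x y' :=
    fun x => Finset.sum_pos (fun y _ => hp x y) Finset.univ_nonempty
  have hpy : ∀ y, 0 < ∑ x', p x' y :=
    fun y => Finset.sum_pos (fun x _ => hp x y) Finset.univ_nonempty
  have key : ∀ x y, p x y * (u x y +
      Real.exp (-u x y) * ∑ y', (∑ x', p x' y') * Real.exp (g x y' - g x y)) =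
      p x y - p x y * Real.log (p x y / ((∑ y', p x y') * (∑ x', p x' y))) := by
    intro x y
    have hxy := hp x y
    have hx := hpx x
    have hy := hpy y
    have hratio : 0 < p x y / ((∑ y', p x y') * (∑ x', p x' y)) := by positivity
    have hsum : ∑ y', (∑ x', p x' y') * Real.exp (g x y' - g x y)
        = (∑ y', p x y') * (∑ x', p x' y) / p x y := by
      have hterm : ∀ y', (∑ x', p x' y') * Real.exp (g x y' - g x y)
          = p x y' * ((∑ x', p x' y) / p x y) := by
        intro y'
        have hy' := hpy y'
        have hxy' := hp x y'
        have hr' : 0 < p x y' / (∑ x', p x' y') := by positivity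
        have hr : 0 < p x y / (∑ x', p x' y) := by positivity
        rw [hg, hg, Real.exp_sub, Real.exp_add, Real.exp_add,
          Real.exp_log hr', Real.exp_log hr]
        field_simp
      rw [Finset.sum_congr rfl (fun y' _ => hterm y'), ← Finset.sum_mul]
      field_simp
    rw [hu, neg_neg, Real.exp_log hratio, hsum]
    rw [Real.log_div hxy.ne' (by positivity)]
    field_simp
    ring
  rw [Finset.sum_congr rfl (fun x _ => Finset.sum_congr rfl (fun y _ => key x y))]
  simp only [Finset.sum_sub_distrib]
  rw [hp1]
  ring
end

section
/- In the FLO setting, for fixed g the function u maximizing I_FLO(g,u) pointwise is u_g(x,y) = log E_{p(y')}[e^{g(x,y') - g(x,y)}], and with this choice I_FLO(g, u_g) equals the UBA bound E_{p(x,y)}[g(x,y) - log Z_g(x)]. -/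
/-!
For fixed `g` and `(x, y)`, `I_FLO` depends on `u(x, y)` only through `t + e^{-t} S` with
`S = E_{p(y')}[e^{g(x,y') - g(x,y)}] > 0`. By `e^s ≥ 1 + s` at `s = log S - t`, this is
minimized at `t = log S`, with value `log S + 1`; summing against `p` gives optimality of `u_g`.
Since `S = e^{-g(x,y)} Z_g(x)`, the optimal value is `1 - E_p[log Z_g(x) - g(x,y) + 1]`, which is
the UBA bound because `p` has total mass one.
-/

open Real Finset

theorem add_exp_neg_log_mul {S : ℝ} (hS : 0 < S) : log S + exp (-log S) * S = log S + 1 := by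
  rw [exp_neg, exp_log hS, inv_mul_cancel₀ hS.ne']

theorem log_add_one_le_add_exp_neg_mul {S : ℝ} (hS : 0 < S) (t : ℝ) :
    log S + 1 ≤ t + exp (-t) * S := by
  have h := add_one_le_exp (log S - t)
  rw [exp_sub, exp_log hS] at h
  rw [exp_neg, inv_mul_eq_div]
  linarith

section WeightedExpSum

variable {β : Type*} [Fintype β] (w f : β → ℝ)

theorem sum_mul_exp_sub (c : ℝ) :
    ∑ y, w y * exp (f y - c) = exp (-c) * ∑ y, w y * exp (f y) := by
  rw [mul_sum]
  congr with y
  rw [exp_sub, exp_neg]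
  ring

theorem sum_mul_exp_pos [Nonempty β] {w : β → ℝ} (hw : ∀ y, 0 < w y) :
    0 < ∑ y, w y * exp (f y) :=
  sum_pos (fun y _ => mul_pos (hw y) (exp_pos _)) univ_nonempty

theorem log_sum_mul_exp_sub [Nonempty β] {w : β → ℝ} (hw : ∀ y, 0 < w y) (c : ℝ) :
    log (∑ y, w y * exp (f y - c)) = log (∑ y, w y * exp (f y)) - c := by
  rw [sum_mul_exp_sub, log_mul (exp_pos _).ne' (sum_mul_exp_pos f hw).ne', log_exp]
  ring

end WeightedExpSum

theorem flo_optimal_u_general {α β : Type*} [Fintype α] [Fintype β]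
    (p : α → β → ℝ) (g : α → β → ℝ) (ug : α → β → ℝ)
    (hp0 : ∀ x y, 0 ≤ p x y) (hp1 : ∑ x, ∑ y, p x y = 1)
    (hpy : ∀ y, 0 < ∑ x, p x y)
    (hug : ∀ x y, ug x y =
      Real.log (∑ y', (∑ x', p x' y') * Real.exp (g x y' - g x y))) :
    (∀ u : α → β → ℝ,
      1 - ∑ x, ∑ y, p x y * (u x y +
          Real.exp (-u x y) *
            ∑ y', (∑ x', p x' y') * Real.exp (g x y' - g x y)) ≤
      1 - ∑ x, ∑ y, p x y * (ug x y +
          Real.exp (-ug x y) *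
            ∑ y', (∑ x', p x' y') * Real.exp (g x y' - g x y))) ∧
    (1 - ∑ x, ∑ y, p x y * (ug x y +
          Real.exp (-ug x y) *
            ∑ y', (∑ x', p x' y') * Real.exp (g x y' - g x y)) =
      ∑ x, ∑ y, p x y *
        (g x y - Real.log (∑ y', (∑ x', p x' y') * Real.exp (g x y')))) := by
  have hS : ∀ x y, 0 < ∑ y', (∑ x', p x' y') * exp (g x y' - g x y) := fun x y =>
    have : Nonempty β := ⟨y⟩
    sum_mul_exp_pos _ hpy
  refine ⟨fun u => ?_, ?_⟩
  · gcongr 1 - ∑ x, ∑ y, p x y * ?_ with x _ y _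
    · exact hp0 x y
    · rw [hug, add_exp_neg_log_mul (hS x y)]
      exact log_add_one_le_add_exp_neg_mul (hS x y) _
  · have hterm : ∀ x y, p x y * (ug x y + exp (-ug x y) *
        ∑ y', (∑ x', p x' y') * exp (g x y' - g x y)) =
        p x y - p x y * (g x y - log (∑ y', (∑ x', p x' y') * exp (g x y'))) := by
      intro x y
      have : Nonempty β := ⟨y⟩
      rw [hug, add_exp_neg_log_mul (hS x y), log_sum_mul_exp_sub _ hpy]
      ring
    simp only [hterm, sum_sub_distrib, hp1]
    ring

/-- For a fixed critic `g`, `u_g(x,y) = log E_{p(y')}[e^{g(x,y')-g(x,y)}]`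
maximizes `I_FLO(g,·)`, and with this choice `I_FLO(g,u_g)` equals the
UBA bound `E_{p(x,y)}[g(x,y) - log Z_g(x)]`. -/
theorem flo_optimal_u {α β : Type*} [Fintype α] [Fintype β]
    (p : α → β → ℝ) (g : α → β → ℝ) (ug : α → β → ℝ)
    (hp0 : ∀ x y, 0 ≤ p x y) (hp1 : ∑ x, ∑ y, p x y = 1)
    (hpx : ∀ x, 0 < ∑ y, p x y) (hpy : ∀ y, 0 < ∑ x, p x y)
    (hug : ∀ x y, ug x y =
      Real.log (∑ y', (∑ x', p x' y') * Real.exp (g x y' - g x y))) :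
    (∀ u : α → β → ℝ,
      1 - ∑ x, ∑ y, p x y * (u x y +
          Real.exp (-u x y) *
            ∑ y', (∑ x', p x' y') * Real.exp (g x y' - g x y)) ≤
      1 - ∑ x, ∑ y, p x y * (ug x y +
          Real.exp (-ug x y) *
            ∑ y', (∑ x', p x' y') * Real.exp (g x y' - g x y))) ∧
    (1 - ∑ x, ∑ y, p x y * (ug x y +
          Real.exp (-ug x y) *
            ∑ y', (∑ x', p x' y') * Real.exp (g x y' - g x y)) =
      ∑ x, ∑ y, p x y *
        (g x y - Real.log (∑ y', (∑ x', p x' y') * Real.exp (g x y')))) :=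
  flo_optimal_u_general p g ug hp0 hp1 hpy hug
end

section
/- Let X, Y be finite discrete random variables with joint pmf p and positive marginals, and let g : X × Y → ℝ. Then I(X;Y) ≥ E_{p(x,y)}[g(x,y)] - e^{-1}·E_{p(x)p(y)}[e^{g(x,y)}], with equality when g(x,y) = 1 + log(p(x,y)/(p(x)p(y))). -/
lemma nwj_key (a b t : ℝ) (ha : 0 < a) (hb : 0 < b) :
    a * t - Real.exp (-1) * (b * Real.exp t) ≤ a * Real.log (a / b) := by
  set s := t - 1 - Real.log (a / b) with hs
  clear_value s
  have hab : 0 < a / b := div_pos ha hb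
  have hkey : Real.exp (-1) * (b * Real.exp t) = a * Real.exp s := by
    rw [hs, Real.exp_sub, Real.exp_sub, Real.exp_log hab, Real.exp_neg]
    field_simp
  rw [hkey]
  have h1 : s + 1 ≤ Real.exp s := Real.add_one_le_exp s
  have ht : t = s + 1 + Real.log (a / b) := by rw [hs]; ring
  rw [ht]
  nlinarith [mul_le_mul_of_nonneg_left h1 ha.le]

lemma nwj_key_eq (a b : ℝ) (ha : 0 < a) (hb : 0 < b) :
    Real.exp (-1) * (b * Real.exp (1 + Real.log (a / b))) = a := by
  rw [Real.exp_add, Real.exp_log (div_pos ha hb), Real.exp_neg]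
  field_simp

/-- Nguyen–Wainwright–Jordan (NWJ) lower bound:
`I(X;Y) ≥ E_{p(x,y)}[g] - e⁻¹·E_{p(x)p(y)}[e^g]`, with equality when
`g(x,y) = 1 + log(p(x,y)/(p(x)p(y)))`. -/
theorem nwj_bound {α β : Type*} [Fintype α] [Fintype β]
    (p : α → β → ℝ) (hp : ∀ x y, 0 < p x y) (hp1 : ∑ x, ∑ y, p x y = 1) :
    (∀ g : α → β → ℝ,
      ∑ x, ∑ y, p x y * Real.log (p x y / ((∑ y', p x y') * (∑ x', p x' y))) ≥
        (∑ x, ∑ y, p x y * g x y) -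
          Real.exp (-1) *
            ∑ x, ∑ y, (∑ y', p x y') * (∑ x', p x' y) * Real.exp (g x y)) ∧
    (∀ g : α → β → ℝ,
      (∀ x y, g x y =
        1 + Real.log (p x y / ((∑ y', p x y') * (∑ x', p x' y)))) →
      ∑ x, ∑ y, p x y * Real.log (p x y / ((∑ y', p x y') * (∑ x', p x' y))) =
        (∑ x, ∑ y, p x y * g x y) -
          Real.exp (-1) *
            ∑ x, ∑ y, (∑ y', p x y') * (∑ x', p x' y) * Real.exp (g x y)) := by
  have hβ : Nonempty β := by
    by_contra h
    rw [not_nonempty_iff] at h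
    simp [Finset.univ_eq_empty] at hp1
  have hα : Nonempty α := by
    by_contra h
    rw [not_nonempty_iff] at h
    simp [Finset.univ_eq_empty] at hp1
  have hq : ∀ x y, 0 < (∑ y', p x y') * (∑ x', p x' y) := fun x y =>
    mul_pos (Finset.sum_pos (fun y' _ => hp x y') Finset.univ_nonempty)
      (Finset.sum_pos (fun x' _ => hp x' y) Finset.univ_nonempty)
  constructor
  · intro g
    rw [ge_iff_le, Finset.mul_sum, ← Finset.sum_sub_distrib]
    refine Finset.sum_le_sum fun x _ => ?_
    rw [Finset.mul_sum, ← Finset.sum_sub_distrib]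
    refine Finset.sum_le_sum fun y _ => ?_
    have := nwj_key (p x y) ((∑ y', p x y') * (∑ x', p x' y)) (g x y) (hp x y) (hq x y)
    linarith
  · intro g hg
    rw [Finset.mul_sum, ← Finset.sum_sub_distrib]
    refine Finset.sum_congr rfl fun x _ => ?_
    rw [Finset.mul_sum, ← Finset.sum_sub_distrib]
    refine Finset.sum_congr rfl fun y _ => ?_
    rw [hg x y]
    have := nwj_key_eq (p x y) ((∑ y', p x y') * (∑ x', p x' y)) (hp x y) (hq x y)
    rw [show Real.exp (-1) * ((∑ y', p x y') * (∑ x', p x' y) * Real.exp (1 + Real.log (p x y / ((∑ y', p x y') * (∑ x', p x' y))))) = p x y from by linarith [this]]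
    ring
end

section
/- Let X, Y be finite discrete random variables with joint pmf p and positive marginals, and let g : X × Y → ℝ be any function. Then I(X;Y) ≥ E_{p(x,y)}[g(x,y)] - log E_{p(x)p(y)}[e^{g(x,y)}]. -/
lemma dv_term (a r : ℝ) (ha : 0 ≤ a) (hr : 0 < r) :
    a - r ≤ a * Real.log (a / r) := by
  rcases eq_or_lt_of_le ha with h | h
  · simp [← h]; positivity
  · have h1 : Real.log (r / a) ≤ r / a - 1 :=
      Real.log_le_sub_one_of_pos (by positivity)
    have h2 : Real.log (a / r) = - Real.log (r / a) := by
      rw [← Real.log_inv]; congr 1; field_simp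
    have h3 := mul_le_mul_of_nonneg_left h1 h.le
    have h4 : a * (r / a - 1) = r - a := by field_simp
    rw [h2]
    linarith

/-- Donsker–Varadhan lower bound on mutual information:
`I(X;Y) ≥ E_{p(x,y)}[g] - log E_{p(x)p(y)}[e^g]` for any critic `g`. -/
theorem dv_bound {α β : Type*} [Fintype α] [Fintype β]
    (p : α → β → ℝ) (g : α → β → ℝ)
    (hp0 : ∀ x y, 0 ≤ p x y) (hp1 : ∑ x, ∑ y, p x y = 1)
    (hpx : ∀ x, 0 < ∑ y, p x y) (hpy : ∀ y, 0 < ∑ x, p x y) :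
    ∑ x, ∑ y, p x y * Real.log (p x y / ((∑ y', p x y') * (∑ x', p x' y))) ≥
      (∑ x, ∑ y, p x y * g x y) -
        Real.log (∑ x, ∑ y, (∑ y', p x y') * (∑ x', p x' y) *
          Real.exp (g x y)) := by
  classical
  have hα : Nonempty α := by
    by_contra h
    rw [not_nonempty_iff] at h
    simp at hp1
  have hβ : Nonempty β := by
    by_contra h
    rw [not_nonempty_iff] at h
    simp at hp1
  set q : α → β → ℝ := fun x y => (∑ y', p x y') * (∑ x', p x' y) with hq
  have hqpos : ∀ x y, 0 < q x y := fun x y => mul_pos (hpx x) (hpy y)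
  set Z : ℝ := ∑ x, ∑ y, q x y * Real.exp (g x y) with hZ
  have hZpos : 0 < Z := by
    apply Finset.sum_pos _ Finset.univ_nonempty
    intro x _
    apply Finset.sum_pos _ Finset.univ_nonempty
    intro y _
    exact mul_pos (hqpos x y) (Real.exp_pos _)
  -- termwise inequality
  have key : ∀ x y, p x y - q x y * Real.exp (g x y) / Z ≤
      p x y * Real.log (p x y / q x y) - p x y * g x y + p x y * Real.log Z := by
    intro x y
    rcases eq_or_lt_of_le (hp0 x y) with h | h
    · rw [← h]
      simp
      exact le_of_lt (div_pos (mul_pos (hqpos x y) (Real.exp_pos _)) hZpos)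
    · have hr : (0:ℝ) < q x y * Real.exp (g x y) / Z := div_pos (mul_pos (hqpos x y) (Real.exp_pos _)) hZpos
      have := dv_term (p x y) (q x y * Real.exp (g x y) / Z) (hp0 x y) hr
      have hlog : Real.log (p x y / (q x y * Real.exp (g x y) / Z)) =
          Real.log (p x y / q x y) - g x y + Real.log Z := by
        rw [Real.log_div (ne_of_gt h) (ne_of_gt hr),
          Real.log_div (ne_of_gt (mul_pos (hqpos x y) (Real.exp_pos _))) (ne_of_gt hZpos),
          Real.log_mul (ne_of_gt (hqpos x y)) (ne_of_gt (Real.exp_pos _)),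
          Real.log_exp, Real.log_div (ne_of_gt h) (ne_of_gt (hqpos x y))]
        ring
      rw [hlog] at this
      nlinarith
  have hsum : ∑ x, ∑ y, (p x y - q x y * Real.exp (g x y) / Z) ≤
      ∑ x, ∑ y, (p x y * Real.log (p x y / q x y) - p x y * g x y +
        p x y * Real.log Z) := by
    apply Finset.sum_le_sum
    intro x _
    exact Finset.sum_le_sum fun y _ => key x y
  have hL : ∑ x, ∑ y, (p x y - q x y * Real.exp (g x y) / Z) = 0 := by
    simp only [Finset.sum_sub_distrib]
    rw [hp1]
    have : ∑ x, ∑ y, q x y * Real.exp (g x y) / Z = Z / Z := by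
      rw [hZ]
      rw [Finset.sum_div]
      congr 1
      ext x
      rw [Finset.sum_div]
    rw [this, div_self (ne_of_gt hZpos)]
    ring
  have hR : ∑ x, ∑ y, (p x y * Real.log (p x y / q x y) - p x y * g x y +
        p x y * Real.log Z) =
      (∑ x, ∑ y, p x y * Real.log (p x y / q x y)) -
        (∑ x, ∑ y, p x y * g x y) + Real.log Z := by
    simp only [Finset.sum_add_distrib, Finset.sum_sub_distrib, ← Finset.sum_mul]
    rw [hp1]
    ring
  rw [hL, hR] at hsum
  linarith
end

section
/- For finite discrete probability measures P and Q on the same finite set with Q(x) > 0 for all x and P absolutely continuous w.r.t. Q, KL(P‖Q) = sup over functions g of (E_P[g] - log E_Q[e^g]), with the supremum attained at g = log(dP/dQ). -/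
lemma gibbs_aux {α : Type*} [Fintype α] (P R : α → ℝ)
    (hP : ∀ x, 0 < P x) (hR : ∀ x, 0 < R x)
    (hP1 : ∑ x, P x = 1) (hR1 : ∑ x, R x = 1) :
    ∑ x, P x * Real.log (R x / P x) ≤ 0 := by
  have h : ∀ x ∈ Finset.univ, P x * Real.log (R x / P x) ≤ P x * (R x / P x - 1) := by
    intro x _
    exact mul_le_mul_of_nonneg_left
      (Real.log_le_sub_one_of_pos (div_pos (hR x) (hP x))) (hP x).le
  calc ∑ x, P x * Real.log (R x / P x) ≤ ∑ x, P x * (R x / P x - 1) :=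
        Finset.sum_le_sum h
    _ = ∑ x, (R x - P x) := by
        apply Finset.sum_congr rfl; intro x _
        rw [mul_sub, mul_div_cancel₀ _ (hP x).ne', mul_one]
    _ = 0 := by rw [Finset.sum_sub_distrib, hP1, hR1, sub_self]

/-- Donsker–Varadhan representation of the KL divergence for finite discrete
probability measures: `KL(P‖Q) = sup_g (E_P[g] - log E_Q[e^g])`, with the
supremum attained at `g = log(dP/dQ)`. -/
theorem dv_representation {α : Type*} [Fintype α]
    (P Q : α → ℝ)
    (hP : ∀ x, 0 < P x) (hP1 : ∑ x, P x = 1)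
    (hQ : ∀ x, 0 < Q x) (hQ1 : ∑ x, Q x = 1)
    (hac : ∀ x, Q x = 0 → P x = 0) :
    (∀ g : α → ℝ,
      (∑ x, P x * g x) - Real.log (∑ x, Q x * Real.exp (g x)) ≤
        ∑ x, P x * Real.log (P x / Q x)) ∧
    ((∑ x, P x * Real.log (P x / Q x)) -
        Real.log (∑ x, Q x * Real.exp (Real.log (P x / Q x))) =
      ∑ x, P x * Real.log (P x / Q x)) := by
  have hne : Nonempty α := by
    by_contra h
    rw [not_nonempty_iff] at h
    simp [Finset.univ_eq_empty] at hP1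
  constructor
  · intro g
    set Z := ∑ x, Q x * Real.exp (g x) with hZ
    have hZpos : 0 < Z := by
      apply Finset.sum_pos
      · intro x _; exact mul_pos (hQ x) (Real.exp_pos _)
      · exact Finset.univ_nonempty
    set R : α → ℝ := fun x => Q x * Real.exp (g x) / Z with hRdef
    have hRpos : ∀ x, 0 < R x := fun x => div_pos (mul_pos (hQ x) (Real.exp_pos _)) hZpos
    have hR1 : ∑ x, R x = 1 := by
      rw [← Finset.sum_div]; exact div_self hZpos.ne'
    have key := gibbs_aux P R hP hRpos hP1 hR1
    have hterm : ∀ x, P x * Real.log (R x / P x)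
        = P x * g x - P x * Real.log Z - P x * Real.log (P x / Q x) := by
      intro x
      have : R x / P x = Real.exp (g x) / Z / (P x / Q x) := by
        rw [hRdef]; field_simp
      rw [this, Real.log_div (by positivity) (div_pos (hP x) (hQ x)).ne',
        Real.log_div (Real.exp_pos _).ne' hZpos.ne', Real.log_exp]
      ring
    rw [Finset.sum_congr rfl (fun x _ => hterm x)] at key
    have hsum : ∑ x, (P x * g x - P x * Real.log Z - P x * Real.log (P x / Q x))
        = (∑ x, P x * g x) - Real.log Z - ∑ x, P x * Real.log (P x / Q x) := by
      simp [Finset.sum_sub_distrib, ← Finset.sum_mul, hP1]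
    rw [hsum] at key
    linarith
  · have h1 : ∑ x, Q x * Real.exp (Real.log (P x / Q x)) = 1 := by
      rw [show (1:ℝ) = ∑ x, P x from hP1.symm]
      apply Finset.sum_congr rfl
      intro x _
      rw [Real.exp_log (div_pos (hP x) (hQ x)), mul_comm, div_mul_cancel₀ _ (hQ x).ne']
    rw [h1, Real.log_one, sub_zero]
end

section
/- Let X, Y be finite discrete random variables with joint pmf p and positive marginals, g : X × Y → ℝ and u : X → ℝ. Then I(X;Y) ≥ E_{p(x,y)}[g(x,y)] + E_{p(x)}[-u(x) + 1] - E_{p(x)p(y)}[e^{g(x,y) - u(x)}]. -/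
lemma tuba_pointwise (a b t : ℝ) (ha : 0 ≤ a) (hb : 0 < b) :
    a * (t + 1) - b * Real.exp t ≤ a * Real.log (a / b) := by
  rcases eq_or_lt_of_le ha with h | h
  · have : (0:ℝ) < b * Real.exp t := by positivity
    simp [← h]
    nlinarith
  · have he : (0:ℝ) < Real.exp t := Real.exp_pos t
    have key : Real.log (b * Real.exp t / a) ≤ b * Real.exp t / a - 1 :=
      Real.log_le_sub_one_of_pos (by positivity)
    have hlog : Real.log (b * Real.exp t / a) = Real.log b + t - Real.log a := by
      rw [Real.log_div (by positivity) (ne_of_gt h), Real.log_mul (ne_of_gt hb) (ne_of_gt he),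
        Real.log_exp]
    have hlog2 : Real.log (a / b) = Real.log a - Real.log b :=
      Real.log_div (ne_of_gt h) (ne_of_gt hb)
    rw [hlog] at key
    have hd : b * Real.exp t / a * a = b * Real.exp t := by field_simp
    nlinarith [mul_le_mul_of_nonneg_right key (le_of_lt h)]

/-- TUBA (tractable unnormalized Barber–Agakov) lower bound:
`I(X;Y) ≥ E_{p(x,y)}[g] + E_{p(x)}[-u(x)+1] - E_{p(x)p(y)}[e^{g(x,y)-u(x)}]`. -/
theorem tuba_bound {α β : Type*} [Fintype α] [Fintype β]
    (p : α → β → ℝ) (g : α → β → ℝ) (u : α → ℝ)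
    (hp0 : ∀ x y, 0 ≤ p x y) (hp1 : ∑ x, ∑ y, p x y = 1)
    (hpx : ∀ x, 0 < ∑ y, p x y) (hpy : ∀ y, 0 < ∑ x, p x y) :
    ∑ x, ∑ y, p x y * Real.log (p x y / ((∑ y', p x y') * (∑ x', p x' y))) ≥
      (∑ x, ∑ y, p x y * g x y) + (∑ x, (∑ y, p x y) * (-u x + 1)) -
        ∑ x, ∑ y, (∑ y', p x y') * (∑ x', p x' y) *
          Real.exp (g x y - u x) := by
  have key : ∀ x y, p x y * (g x y - u x + 1)
      - (∑ y', p x y') * (∑ x', p x' y) * Real.exp (g x y - u x)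
      ≤ p x y * Real.log (p x y / ((∑ y', p x y') * (∑ x', p x' y))) := fun x y =>
    tuba_pointwise (p x y) _ (g x y - u x) (hp0 x y) (mul_pos (hpx x) (hpy y))
  have h1 : ∑ x, ∑ y, (p x y * (g x y - u x + 1)
      - (∑ y', p x y') * (∑ x', p x' y) * Real.exp (g x y - u x))
      ≤ ∑ x, ∑ y, p x y * Real.log (p x y / ((∑ y', p x y') * (∑ x', p x' y))) :=
    Finset.sum_le_sum fun x _ => Finset.sum_le_sum fun y _ => key x y
  refine le_trans (le_of_eq ?_) h1
  simp only [Finset.sum_sub_distrib]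
  congr 1
  rw [← Finset.sum_add_distrib]
  congr 1
  ext x
  rw [Finset.sum_mul, ← Finset.sum_add_distrib]
  congr 1
  ext y
  ring
end

section
/- Let X, Y be finite discrete random variables with joint pmf p and positive marginals, and let g : X × Y → ℝ. For any K ≥ 1, the InfoNCE objective I_NCE^K(g) = E[log( e^{g(X_1,Y_1)} / ((1/K) Σ_{j=1}^K e^{g(X_1,Y_j)}) )], where (X_1,Y_1) ~ p(x,y) and Y_2,…,Y_K are i.i.d. from the marginal p(y) independent of (X_1,Y_1), satisfies I_NCE^K(g) ≤ I(X;Y). -/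
open Finset

/-- Summing a function of one coordinate against the product of a probability
mass `q` over the other coordinates integrates out those coordinates. -/
private lemma sum_fn_split {β : Type*} [Fintype β] {K : ℕ} (i0 : Fin K)
    (f q : β → ℝ) (hq : ∑ y, q y = 1) :
    ∑ ys : Fin K → β, f (ys i0) * ∏ j ∈ Finset.univ.erase i0, q (ys j) = ∑ y, f y := by
  classical
  have h1 : ∀ ys : Fin K → β,
      f (ys i0) * ∏ j ∈ Finset.univ.erase i0, q (ys j)
        = ∏ j, (if j = i0 then f else q) (ys j) := by
    intro ys
    rw [← Finset.mul_prod_erase Finset.univ (fun j => (if j = i0 then f else q) (ys j))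
      (Finset.mem_univ i0)]
    simp only [if_pos rfl]
    congr 1
    refine Finset.prod_congr rfl fun j hj => ?_
    rw [if_neg (Finset.ne_of_mem_erase hj)]
  calc ∑ ys : Fin K → β, f (ys i0) * ∏ j ∈ Finset.univ.erase i0, q (ys j)
      = ∑ ys ∈ Fintype.piFinset (fun _ : Fin K => (Finset.univ : Finset β)),
          ∏ j, (if j = i0 then f else q) (ys j) := by
        rw [Fintype.piFinset_univ]; exact Finset.sum_congr rfl fun ys _ => h1 ys
    _ = ∏ j, ∑ y, (if j = i0 then f else q) y := (Finset.prod_univ_sum _ _).symm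
    _ = ∑ y, f y := by
        rw [← Finset.mul_prod_erase Finset.univ (fun j => ∑ y, (if j = i0 then f else q) y)
          (Finset.mem_univ i0), Finset.prod_eq_one (fun j hj => by
            rw [if_neg (Finset.ne_of_mem_erase hj)]; exact hq), mul_one]
        simp

/-- The product pmf over `Fin K → β` sums to one. -/
private lemma sum_prod_univ {β : Type*} [Fintype β] {K : ℕ} (q : β → ℝ)
    (hq : ∑ y, q y = 1) :
    ∑ ys : Fin K → β, ∏ j, q (ys j) = 1 := by
  classical
  rw [← Fintype.piFinset_univ, ← Finset.prod_univ_sum]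
  simp [hq]

/-- Symmetrization: under the exchangeable product measure, the coordinate `i`
can be swapped with `i0`. -/
private lemma sum_swap_coord {β : Type*} [Fintype β] {K : ℕ} (i0 i : Fin K)
    (q e : β → ℝ) :
    ∑ ys : Fin K → β, (∏ j, q (ys j)) * (e (ys i) / ∑ j, e (ys j))
      = ∑ ys : Fin K → β, (∏ j, q (ys j)) * (e (ys i0) / ∑ j, e (ys j)) := by
  classical
  have hinv : Function.Involutive (fun ys : Fin K → β => ys ∘ Equiv.swap i0 i) := by
    intro ys; funext j
    simp [Function.comp, Equiv.swap_apply_self]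
  refine Fintype.sum_bijective _ hinv.bijective _ _ fun ys => ?_
  simp only [Function.comp]
  have h1 : ∏ j, q (ys (Equiv.swap i0 i j)) = ∏ j, q (ys j) :=
    Equiv.prod_comp (Equiv.swap i0 i) (fun j => q (ys j))
  have h2 : ∑ j, e (ys (Equiv.swap i0 i j)) = ∑ j, e (ys j) :=
    Equiv.sum_comp (Equiv.swap i0 i) (fun j => e (ys j))
  rw [Equiv.swap_apply_left, h1, h2]

/-- Single-`x` version of the InfoNCE bound. -/
private lemma per_x {β : Type*} [Fintype β] {K : ℕ} (i0 : Fin K)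
    (f e q : β → ℝ) (c : ℝ)
    (hf0 : ∀ y, 0 ≤ f y) (hq : ∀ y, 0 < q y) (hq1 : ∑ y, q y = 1)
    (he : ∀ y, 0 < e y) (hc : 0 < c) (hfc : ∑ y, f y = c) :
    ∑ ys : Fin K → β, (f (ys i0) * ∏ j ∈ Finset.univ.erase i0, q (ys j)) *
        Real.log (e (ys i0) / ((∑ j, e (ys j)) / (K : ℝ)))
      ≤ ∑ y, f y * Real.log (f y / (c * q y)) := by
  classical
  have hK : 0 < K := i0.pos
  have hKpos : (0 : ℝ) < K := by exact_mod_cast hK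
  have hS : ∀ ys : Fin K → β, 0 < ∑ j, e (ys j) :=
    fun ys => Finset.sum_pos (fun j _ => he _) ⟨i0, Finset.mem_univ i0⟩
  have hprodE : ∀ ys : Fin K → β, 0 < ∏ j ∈ Finset.univ.erase i0, q (ys j) :=
    fun ys => Finset.prod_pos fun j _ => hq _
  -- the value of the "tilted" integral of each coordinate
  have hVconst : ∀ i : Fin K,
      ∑ ys : Fin K → β, (∏ j, q (ys j)) * (e (ys i) / ∑ j, e (ys j))
        = ∑ ys : Fin K → β, (∏ j, q (ys j)) * (e (ys i0) / ∑ j, e (ys j)) :=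
    fun i => sum_swap_coord i0 i q e
  have hVsum : ∑ i : Fin K, ∑ ys : Fin K → β,
      (∏ j, q (ys j)) * (e (ys i) / ∑ j, e (ys j)) = 1 := by
    rw [Finset.sum_comm]
    have h1 : ∀ ys : Fin K → β,
        ∑ i : Fin K, (∏ j, q (ys j)) * (e (ys i) / ∑ j, e (ys j))
          = ∏ j, q (ys j) := by
      intro ys
      rw [← Finset.mul_sum, ← Finset.sum_div, div_self (hS ys).ne', mul_one]
    rw [Finset.sum_congr rfl fun ys _ => h1 ys]
    exact sum_prod_univ q hq1
  have hV : ∑ ys : Fin K → β, (∏ j, q (ys j)) * (e (ys i0) / ∑ j, e (ys j))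
      = 1 / (K : ℝ) := by
    have h2 : ∑ i : Fin K, ∑ ys : Fin K → β,
        (∏ j, q (ys j)) * (e (ys i) / ∑ j, e (ys j))
        = (K : ℝ) * ∑ ys : Fin K → β,
            (∏ j, q (ys j)) * (e (ys i0) / ∑ j, e (ys j)) := by
      rw [Finset.sum_congr rfl fun i _ => hVconst i, Finset.sum_const, Finset.card_univ,
        Fintype.card_fin, nsmul_eq_mul]
    rw [h2] at hVsum
    field_simp at hVsum ⊢
    linarith
  -- sum of the "Q" correction terms
  have hQsum : ∑ ys : Fin K → β,
      c * (∏ j, q (ys j)) * (e (ys i0) / ((∑ j, e (ys j)) / (K : ℝ))) = c := by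
    have h3 : ∀ ys : Fin K → β,
        c * (∏ j, q (ys j)) * (e (ys i0) / ((∑ j, e (ys j)) / (K : ℝ)))
          = (c * K) * ((∏ j, q (ys j)) * (e (ys i0) / ∑ j, e (ys j))) := by
      intro ys
      field_simp
    rw [Finset.sum_congr rfl fun ys _ => h3 ys, ← Finset.mul_sum, hV]
    field_simp
  -- sum of the "P" weights
  have hPsum : ∑ ys : Fin K → β,
      f (ys i0) * ∏ j ∈ Finset.univ.erase i0, q (ys j) = c := by
    rw [sum_fn_split i0 f q hq1]; exact hfc
  -- sum of the MI integrand pulled back to the product space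
  have hBsum : ∑ ys : Fin K → β,
      (f (ys i0) * Real.log (f (ys i0) / (c * q (ys i0)))) *
        ∏ j ∈ Finset.univ.erase i0, q (ys j)
      = ∑ y, f y * Real.log (f y / (c * q y)) :=
    sum_fn_split i0 (fun y => f y * Real.log (f y / (c * q y))) q hq1
  -- pointwise key inequality
  have key : ∀ ys : Fin K → β,
      (f (ys i0) * ∏ j ∈ Finset.univ.erase i0, q (ys j)) *
          Real.log (e (ys i0) / ((∑ j, e (ys j)) / (K : ℝ)))
        ≤ (f (ys i0) * Real.log (f (ys i0) / (c * q (ys i0)))) *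
            (∏ j ∈ Finset.univ.erase i0, q (ys j))
          + (c * (∏ j, q (ys j)) * (e (ys i0) / ((∑ j, e (ys j)) / (K : ℝ)))
              - f (ys i0) * ∏ j ∈ Finset.univ.erase i0, q (ys j)) := by
    intro ys
    by_cases h0 : f (ys i0) = 0
    · rw [h0]
      simp only [zero_mul, mul_zero, zero_add, sub_zero, zero_sub]
      have h4 : 0 < ∏ j, q (ys j) := Finset.prod_pos fun j _ => hq _
      have : 0 ≤ c * (∏ j, q (ys j)) * (e (ys i0) / ((∑ j, e (ys j)) / (K : ℝ))) :=
        mul_nonneg (mul_nonneg hc.le h4.le)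
          (div_pos (he _) (div_pos (hS ys) hKpos)).le
      linarith
    · have hf1 : 0 < f (ys i0) := (hf0 _).lt_of_ne (Ne.symm h0)
      have hP : 0 < f (ys i0) * ∏ j ∈ Finset.univ.erase i0, q (ys j) :=
        mul_pos hf1 (hprodE ys)
      have hA : 0 < e (ys i0) / ((∑ j, e (ys j)) / (K : ℝ)) :=
        div_pos (he _) (div_pos (hS ys) hKpos)
      have hB : 0 < f (ys i0) / (c * q (ys i0)) :=
        div_pos hf1 (mul_pos hc (hq _))
      have hlog : Real.log (e (ys i0) / ((∑ j, e (ys j)) / (K : ℝ)))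
          ≤ Real.log (f (ys i0) / (c * q (ys i0)))
            + ((e (ys i0) / ((∑ j, e (ys j)) / (K : ℝ)))
                / (f (ys i0) / (c * q (ys i0))) - 1) := by
        have h5 := Real.log_le_sub_one_of_pos (div_pos hA hB)
        rw [Real.log_div hA.ne' hB.ne'] at h5
        linarith
      have hsplit : ∏ j, q (ys j)
          = q (ys i0) * ∏ j ∈ Finset.univ.erase i0, q (ys j) :=
        (Finset.mul_prod_erase Finset.univ (fun j => q (ys j)) (Finset.mem_univ i0)).symm
      have hPAB : (f (ys i0) * ∏ j ∈ Finset.univ.erase i0, q (ys j)) *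
            ((e (ys i0) / ((∑ j, e (ys j)) / (K : ℝ)))
              / (f (ys i0) / (c * q (ys i0))))
          = c * (∏ j, q (ys j)) * (e (ys i0) / ((∑ j, e (ys j)) / (K : ℝ))) := by
        rw [hsplit]
        field_simp [hf1.ne', (hS ys).ne', hKpos.ne', (hq (ys i0)).ne', hc.ne']
      calc (f (ys i0) * ∏ j ∈ Finset.univ.erase i0, q (ys j)) *
            Real.log (e (ys i0) / ((∑ j, e (ys j)) / (K : ℝ)))
          ≤ (f (ys i0) * ∏ j ∈ Finset.univ.erase i0, q (ys j)) *
              (Real.log (f (ys i0) / (c * q (ys i0)))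
                + ((e (ys i0) / ((∑ j, e (ys j)) / (K : ℝ)))
                    / (f (ys i0) / (c * q (ys i0))) - 1)) :=
            mul_le_mul_of_nonneg_left hlog hP.le
        _ = (f (ys i0) * Real.log (f (ys i0) / (c * q (ys i0)))) *
              (∏ j ∈ Finset.univ.erase i0, q (ys j))
            + ((f (ys i0) * ∏ j ∈ Finset.univ.erase i0, q (ys j)) *
                ((e (ys i0) / ((∑ j, e (ys j)) / (K : ℝ)))
                  / (f (ys i0) / (c * q (ys i0))))
              - f (ys i0) * ∏ j ∈ Finset.univ.erase i0, q (ys j)) := by ring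
        _ = (f (ys i0) * Real.log (f (ys i0) / (c * q (ys i0)))) *
              (∏ j ∈ Finset.univ.erase i0, q (ys j))
            + (c * (∏ j, q (ys j)) * (e (ys i0) / ((∑ j, e (ys j)) / (K : ℝ)))
              - f (ys i0) * ∏ j ∈ Finset.univ.erase i0, q (ys j)) := by rw [hPAB]
  calc ∑ ys : Fin K → β, (f (ys i0) * ∏ j ∈ Finset.univ.erase i0, q (ys j)) *
        Real.log (e (ys i0) / ((∑ j, e (ys j)) / (K : ℝ)))
      ≤ ∑ ys : Fin K → β,
          ((f (ys i0) * Real.log (f (ys i0) / (c * q (ys i0)))) *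
              (∏ j ∈ Finset.univ.erase i0, q (ys j))
            + (c * (∏ j, q (ys j)) * (e (ys i0) / ((∑ j, e (ys j)) / (K : ℝ)))
                - f (ys i0) * ∏ j ∈ Finset.univ.erase i0, q (ys j))) :=
        Finset.sum_le_sum fun ys _ => key ys
    _ = (∑ ys : Fin K → β, (f (ys i0) * Real.log (f (ys i0) / (c * q (ys i0)))) *
            (∏ j ∈ Finset.univ.erase i0, q (ys j)))
        + ((∑ ys : Fin K → β,
              c * (∏ j, q (ys j)) * (e (ys i0) / ((∑ j, e (ys j)) / (K : ℝ))))
          - ∑ ys : Fin K → β, f (ys i0) * ∏ j ∈ Finset.univ.erase i0, q (ys j)) := by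
        rw [Finset.sum_add_distrib, Finset.sum_sub_distrib]
    _ = (∑ y, f y * Real.log (f y / (c * q y))) + (c - c) := by
        rw [hBsum, hQsum, hPsum]
    _ = ∑ y, f y * Real.log (f y / (c * q y)) := by ring

open Finset in
/-- The `K`-sample InfoNCE objective is a lower bound on mutual information:
`E[log(e^{g(X₁,Y₁)} / ((1/K)·Σⱼ e^{g(X₁,Yⱼ)}))] ≤ I(X;Y)`, where
`(X₁,Y₁) ~ p(x,y)` and `Y₂,…,Y_K are i.i.d. from the marginal `p(y)`,
independent of `(X₁,Y₁)`. -/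
theorem infoNCE_le_mi {α β : Type*} [Fintype α] [Fintype β]
    (p : α → β → ℝ) (g : α → β → ℝ) (K : ℕ) (hK : 0 < K)
    (hp0 : ∀ x y, 0 ≤ p x y) (hp1 : ∑ x, ∑ y, p x y = 1)
    (hpx : ∀ x, 0 < ∑ y, p x y) (hpy : ∀ y, 0 < ∑ x, p x y) :
    ∑ x : α, ∑ ys : Fin K → β,
        (p x (ys ⟨0, hK⟩) *
          ∏ j ∈ Finset.univ.erase (⟨0, hK⟩ : Fin K), (∑ x', p x' (ys j))) *
          Real.log (Real.exp (g x (ys ⟨0, hK⟩)) /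
            ((∑ j : Fin K, Real.exp (g x (ys j))) / K)) ≤
      ∑ x, ∑ y, p x y * Real.log (p x y / ((∑ y', p x y') * (∑ x', p x' y))) := by
  have hq1 : ∑ y : β, ∑ x' : α, p x' y = 1 := by rw [Finset.sum_comm]; exact hp1
  refine Finset.sum_le_sum fun x _ => ?_
  exact per_x (⟨0, hK⟩ : Fin K) (p x) (fun y => Real.exp (g x y))
    (fun y => ∑ x', p x' y) (∑ y', p x y') (hp0 x) (fun y => hpy y) hq1
    (fun y => Real.exp_pos _) (hpx x) rfl
end

section
/- For any K ≥ 1 and any critic g, the InfoNCE objective I_NCE^K(g) satisfies I_NCE^K(g) ≤ log K. -/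
open Finset in
/-- The `K`-sample InfoNCE objective is upper bounded by `log K`
for any critic `g`. -/
theorem infoNCE_le_log_K {α β : Type*} [Fintype α] [Fintype β]
    (p : α → β → ℝ) (g : α → β → ℝ) (K : ℕ) (hK : 0 < K)
    (hp0 : ∀ x y, 0 ≤ p x y) (hp1 : ∑ x, ∑ y, p x y = 1) :
    ∑ x : α, ∑ ys : Fin K → β,
        (p x (ys ⟨0, hK⟩) *
          ∏ j ∈ Finset.univ.erase (⟨0, hK⟩ : Fin K), (∑ x', p x' (ys j))) *
          Real.log (Real.exp (g x (ys ⟨0, hK⟩)) /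
            ((∑ j : Fin K, Real.exp (g x (ys j))) / K)) ≤
      Real.log K := by
  set i0 : Fin K := ⟨0, hK⟩ with hi0
  set q : β → ℝ := fun y => ∑ x', p x' y with hq
  have hq0 : ∀ y, 0 ≤ q y := fun y => Finset.sum_nonneg fun x _ => hp0 x y
  have hq1 : ∑ y, q y = 1 := by rw [hq]; rw [Finset.sum_comm] at hp1; exact hp1
  set w : α → (Fin K → β) → ℝ := fun x ys =>
    p x (ys i0) * ∏ j ∈ Finset.univ.erase i0, q (ys j) with hw
  have hw0 : ∀ x ys, 0 ≤ w x ys := fun x ys =>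
    mul_nonneg (hp0 _ _) (Finset.prod_nonneg fun j _ => hq0 _)
  -- total mass is 1
  have hwsum : ∑ x : α, ∑ ys : Fin K → β, w x ys = 1 := by
    have key : ∀ x : α, ∑ ys : Fin K → β, w x ys = ∑ y, p x y := by
      intro x
      set F : Fin K → β → ℝ := fun j y => if j = i0 then p x y else q y with hF
      have hwF : ∀ ys : Fin K → β, w x ys = ∏ j, F j (ys j) := by
        intro ys
        have hme := Finset.mul_prod_erase (Finset.univ : Finset (Fin K))
          (fun j => F j (ys j)) (Finset.mem_univ i0)
        rw [← hme]
        have heq : ∀ j ∈ Finset.univ.erase i0, F j (ys j) = q (ys j) := by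
          intro j hj
          simp only [hF, if_neg (Finset.ne_of_mem_erase hj)]
        rw [Finset.prod_congr rfl heq]
        simp only [hw, hF, if_pos rfl]
      calc ∑ ys : Fin K → β, w x ys = ∑ ys : Fin K → β, ∏ j, F j (ys j) := by
            exact Finset.sum_congr rfl fun ys _ => hwF ys
        _ = ∏ j, ∑ y, F j y := by
            rw [Finset.prod_univ_sum, Fintype.piFinset_univ]
        _ = ∑ y, p x y := by
            rw [← Finset.mul_prod_erase Finset.univ (fun j => ∑ y, F j y)
              (Finset.mem_univ i0)]
            have : ∀ j ∈ Finset.univ.erase i0, (∑ y, F j y) = 1 := by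
              intro j hj
              simp only [hF, if_neg (Finset.ne_of_mem_erase hj)]
              exact hq1
            rw [Finset.prod_congr rfl this, Finset.prod_const_one, mul_one]
            simp [hF]
    rw [Finset.sum_congr rfl fun x _ => key x]
    exact hp1
  -- each log term is at most log K
  have hlog : ∀ (x : α) (ys : Fin K → β),
      Real.log (Real.exp (g x (ys i0)) /
        ((∑ j : Fin K, Real.exp (g x (ys j))) / K)) ≤ Real.log K := by
    intro x ys
    set S : ℝ := ∑ j : Fin K, Real.exp (g x (ys j)) with hS
    have hSpos : 0 < S := Finset.sum_pos (fun j _ => Real.exp_pos _)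
      ⟨i0, Finset.mem_univ _⟩
    have hKpos : (0:ℝ) < K := Nat.cast_pos.mpr hK
    have h1 : Real.exp (g x (ys i0)) ≤ S :=
      Finset.single_le_sum (f := fun j => Real.exp (g x (ys j)))
        (fun j _ => (Real.exp_pos _).le) (Finset.mem_univ i0)
    have harg : Real.exp (g x (ys i0)) / (S / K) ≤ K := by
      rw [div_div_eq_mul_div, div_le_iff₀ hSpos]
      calc Real.exp (g x (ys i0)) * K ≤ S * K := by
            exact mul_le_mul_of_nonneg_right h1 hKpos.le
        _ = K * S := mul_comm _ _
    have hargpos : 0 < Real.exp (g x (ys i0)) / (S / K) :=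
      div_pos (Real.exp_pos _) (div_pos hSpos hKpos)
    exact Real.log_le_log hargpos harg
  have hlogK : 0 ≤ Real.log K := Real.log_nonneg (by exact_mod_cast hK)
  calc ∑ x : α, ∑ ys : Fin K → β, w x ys *
        Real.log (Real.exp (g x (ys i0)) /
          ((∑ j : Fin K, Real.exp (g x (ys j))) / K))
      ≤ ∑ x : α, ∑ ys : Fin K → β, w x ys * Real.log K := by
        refine Finset.sum_le_sum fun x _ => Finset.sum_le_sum fun ys _ => ?_
        exact mul_le_mul_of_nonneg_left (hlog x ys) (hw0 x ys)
    _ = (∑ x : α, ∑ ys : Fin K → β, w x ys) * Real.log K := by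
        rw [Finset.sum_mul]
        exact Finset.sum_congr rfl fun x _ => (Finset.sum_mul _ _ _).symm
    _ = Real.log K := by rw [hwsum, one_mul]
end
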